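/- Assume hypotheses (H): n ≥ 4 is an integer, δ and δ′ are reals with 0 < δ′ < δ < 1/2 and 1/2 − δ′ < 1 − 2δ, λ is a real with 1/2 − δ′ ≤ λ ≤ 1 − 2δ, α is a real with n − 1 − λ/8 < λα < n − 1, and ā ∈ (0,1]. Then λC₃ − D₄ ≥ λ·((1−ā)²/(2−ā))·(1 − (ā(2−ā)/2)^{δ′+1/2}) ≥ 0, and λC₃ − D₅ ≥ 0. -/
import Mathlib


noncomputable section

def Xc (A δ : ℝ) : ℝ := (A * (2 - A) / 2) ^ (δ + 1 / 2)
def Yc (A δ : ℝ) : ℝ := (A * (2 - A) / 2) ^ (δ - 1 / 2)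
def C1 (A δ α : ℝ) : ℝ :=
  (1 - A) ^ 2 / (2 - A) * Yc A δ + (1 - A) / (2 - A) ^ 2
    + α / (2 - A) ^ 2 * Xc A δ + α * A / (2 - A) ^ 2 * (1 / 2 - Xc A δ)
def C2 (A δ α : ℝ) : ℝ := α * A * (1 - A) * (1 - Xc A δ) - A * (1 - A)
def C3 (A δ α : ℝ) : ℝ :=
  α * A / 2 + (1 - A) ^ 2 / (2 - A) + (α - 2) * (1 - A) ^ 2 / (2 - A) * Xc A δ
def D1 (A δ : ℝ) : ℝ :=
  (1 / 2 - δ) * ((1 - A) ^ 2 / (2 - A)) * Yc A δ - A / (2 * (2 - A) ^ 2) + Xc A δ / (2 - A)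
def D2 (A : ℝ) : ℝ := -(A * (1 - A))
def D3 (n : ℕ) (A δ : ℝ) : ℝ := ((n : ℝ) - 1) / (2 - A) * (1 / 2 - Xc A δ)
def D4 (n : ℕ) (A δ : ℝ) : ℝ :=
  (1 + 2 * δ) * ((1 - A) ^ 2 / (2 - A)) * Xc A δ + ((n : ℝ) - 2) * A * (1 / 2 - Xc A δ)
def D5 (n : ℕ) (A δ : ℝ) : ℝ :=
  (1 + 2 * δ) * ((1 - A) ^ 2 / (2 - A)) * Xc A δ + (n : ℝ) * A * (1 / 2 - Xc A δ)

set_option maxHeartbeats 1600000 in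
theorem stmt9 (n : ℕ) (hn : 4 ≤ n) (δ δ' lam α A : ℝ)
    (h1 : 0 < δ') (h2 : δ' < δ) (h3 : δ < 1 / 2)
    (h4 : 1 / 2 - δ' < 1 - 2 * δ)
    (h5 : 1 / 2 - δ' ≤ lam) (h6 : lam ≤ 1 - 2 * δ)
    (h7 : (n : ℝ) - 1 - lam / 8 < lam * α) (h8 : lam * α < (n : ℝ) - 1)
    (h9 : 0 < A) (h10 : A ≤ 1) :
    lam * C3 A δ' α - D4 n A δ' ≥ lam * ((1 - A) ^ 2 / (2 - A)) * (1 - Xc A δ') ∧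
    lam * ((1 - A) ^ 2 / (2 - A)) * (1 - Xc A δ') ≥ 0 ∧
    lam * C3 A δ' α - D5 n A δ' ≥ 0 := by
  have hn4 : (4:ℝ) ≤ (n:ℝ) := by exact_mod_cast hn
  have hA2 : (1:ℝ) ≤ 2 - A := by linarith
  have hA2' : (0:ℝ) < 2 - A := by linarith
  have hd12 : δ' < 1/2 := by linarith
  have hlam0 : 0 < lam := by linarith
  have hlam1 : lam ≤ 1 := by linarith
  have hb0 : 0 < A * (2 - A) / 2 := by positivity
  have hb1 : A * (2 - A) / 2 ≤ 1/2 := by nlinarith [sq_nonneg (1 - A)]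
  have hbA : A * (2 - A) / 2 ≤ A := by nlinarith
  set X := Xc A δ' with hXdef
  have hXeq : X = (A * (2 - A) / 2) ^ (δ' + 1/2 : ℝ) := rfl
  have hX0 : 0 < X := by rw [hXeq]; exact Real.rpow_pos_of_pos hb0 _
  have hX1 : X ≤ 1 := by
    rw [hXeq]; exact Real.rpow_le_one hb0.le (by linarith) (by linarith)
  have hXb : A * (2 - A) / 2 ≤ X := by
    rw [hXeq]
    calc A * (2 - A) / 2 = (A * (2 - A) / 2) ^ (1:ℝ) := (Real.rpow_one _).symm
    _ ≤ (A * (2 - A) / 2) ^ (δ' + 1/2 : ℝ) :=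
        Real.rpow_le_rpow_of_exponent_ge hb0 (by linarith) (by linarith)
  set s := A ^ (1/2 : ℝ) with hsdef
  have hs0 : 0 < s := Real.rpow_pos_of_pos h9 _
  have hs2 : s * s = A := by
    rw [hsdef, ← Real.rpow_add h9]; norm_num
  have hXs : X ≤ s := by
    rw [hXeq, hsdef]
    calc (A * (2 - A) / 2) ^ (δ' + 1/2 : ℝ) ≤ (A * (2 - A) / 2) ^ (1/2 : ℝ) :=
        Real.rpow_le_rpow_of_exponent_ge hb0 (by linarith) (by linarith)
    _ ≤ A ^ (1/2 : ℝ) := Real.rpow_le_rpow hb0.le hbA (by norm_num)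
  clear_value X
  clear_value s
  set B := (1 - A) ^ 2 / (2 - A) with hBdef
  clear_value B
  have hB0 : 0 ≤ B := by rw [hBdef]; positivity
  have hB2 : B * (2 - A) = (1 - A)^2 := by rw [hBdef]; field_simp
  have hB12 : B ≤ 1/2 := by
    rw [hBdef, div_le_iff₀ hA2']
    nlinarith [mul_nonneg h9.le (show (0:ℝ) ≤ 3/2 - A by linarith)]
  have hBX : 0 ≤ B * X := mul_nonneg hB0 hX0.le
  have hC3 : C3 A δ' α = α * A / 2 + B + (α - 2) * (B * X) := by
    rw [hBdef, hXdef]; unfold C3; ring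
  have hD4 : D4 n A δ' = (1 + 2*δ') * (B * X) + ((n:ℝ) - 2) * A * (1/2 - X) := by
    rw [hBdef, hXdef]; unfold D4; ring
  have hD5 : D5 n A δ' = (1 + 2*δ') * (B * X) + (n:ℝ) * A * (1/2 - X) := by
    rw [hBdef, hXdef]; unfold D5; ring
  -- key bounds from h7
  have P1 : ((n:ℝ) - 2) * A * (1/2 - X) ≤ lam * α * A / 2 := by
    have h := mul_le_mul_of_nonneg_right
      (show (n:ℝ) - 2 + 7/8 ≤ lam * α by linarith) (by positivity : (0:ℝ) ≤ A / 2)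
    have h2 : 0 ≤ ((n:ℝ) - 2) * A * X :=
      mul_nonneg (mul_nonneg (by linarith) h9.le) hX0.le
    linarith [h, h2, h9.le]
  have P2 : 1 + 2*δ' ≤ lam * (α - 1) := by
    have : lam * (α - 1) = lam * α - lam := by ring
    rw [this]; linarith [h7, h6, h2, hn4, h1]
  have P2' : (1 + 2*δ') * (B * X) ≤ lam * (α - 1) * (B * X) :=
    mul_le_mul_of_nonneg_right P2 hBX
  -- the key bound for the third inequality
  have hT : 0 ≤ -A/2 + 4*(A*X) + B*X + lam*(B - 17/8*(B*X) - A/16) := by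
    have hB2A : A*(B*(2-A)) = A*((1-A)^2) := by rw [hB2]
    rcases le_or_gt 0 (B - 17/8*(B*X) - A/16) with hK | hK
    · have h1 : (4*A+B)*(A * (2 - A) / 2) ≤ (4*A+B)*X :=
        mul_le_mul_of_nonneg_left hXb (by linarith)
      have h2 : 0 ≤ lam*(B - 17/8*(B*X) - A/16) := mul_nonneg hlam0.le hK
      nlinarith [h1, h2, hB2A, mul_nonneg (mul_nonneg h9.le h9.le) hA2'.le]
    · have hlK : B - 17/8*(B*X) - A/16 ≤ lam*(B - 17/8*(B*X) - A/16) := by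
        nlinarith [mul_nonneg (show (0:ℝ) ≤ 1 - lam by linarith)
          (show (0:ℝ) ≤ -(B - 17/8*(B*X) - A/16) by linarith)]
      rcases le_or_gt 0 (4*A - 9/8*B) with hc | hc
      · have h1 : (4*A - 9/8*B)*(A * (2 - A) / 2) ≤ (4*A - 9/8*B)*X :=
          mul_le_mul_of_nonneg_left hXb hc
        have h3 : B*(A * (2 - A) / 2) ≤ B*(1/2) := mul_le_mul_of_nonneg_left hb1 hB0
        have h4 : 0 ≤ -9*A/16 + 2*A^2*(2-A) + 7/16*B := by
          have h5 : 0 ≤ (-9*A/16 + 2*A^2*(2-A) + 7/16*B) * (2-A) := by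
            nlinarith [hB2, sq_nonneg (A*(2-A) - 1/4)]
          nlinarith [h5, hA2']
        linarith [h1, h3, h4, hlK]
      · have h1 : (4*A - 9/8*B)*s ≤ (4*A - 9/8*B)*X :=
          mul_le_mul_of_nonpos_left hXs hc.le
        have hs38 : s ≤ 3/8 := by nlinarith [sq_nonneg (s - 3/8), hs2, hc, hB12]
        have hBs : B*s ≤ B*(3/8) := mul_le_mul_of_nonneg_left hs38 hB0
        have hAs : 0 ≤ A*s := mul_nonneg h9.le hs0.le
        linarith [h1, hBs, hAs, hlK, hc, hB0]
  refine ⟨?_, ?_, ?_⟩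
  · rw [hC3, hD4]
    linarith [P1, P2']
  · exact mul_nonneg (mul_nonneg hlam0.le hB0) (by linarith)
  · rw [hC3, hD5]
    have Q0 : (0:ℝ) ≤ A/2 + B*X := by positivity
    have Q1 : ((n:ℝ) - 1 - lam/8) * (A/2 + B*X) ≤ lam*α * (A/2 + B*X) :=
      mul_le_mul_of_nonneg_right h7.le Q0
    have h_nAX : 4*(A*X) ≤ (n:ℝ)*(A*X) :=
      mul_le_mul_of_nonneg_right hn4 (mul_nonneg h9.le hX0.le)
    have h_nBX : 1*(B*X) ≤ ((n:ℝ)-2-2*δ')*(B*X) :=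
      mul_le_mul_of_nonneg_right (by linarith) hBX
    linarith [Q1, hT, h_nAX, h_nBX]
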